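/- For every n-store multi-automaton A = (Q, Σ, Δ, {q^1,…,q^z}, Q_f) (assumed total when n = 1), the complement automaton Ā constructed by the inversion-of-target-sets construction satisfies L(Ā^{q^j}) = the complement of L(A^{q^j}) for every j ∈ {1,…,z}; the construction is at most exponential in the size of A. In particular, regular sets of configurations of order-n (A)PDSs are closed under complementation. -/

import Mathlib

namespace HOPDS

/-- `St α k` is the type of order-`(k+1)` stores over the alphabet `α`
(so an `n`-store, for `n ≥ 1`, is a term of type `St α (n-1)`).
An order-1 store is a finite word; an order-`(k+2)` store is a nonempty
list (encoded as head plus tail of the list) of order-`(k+1)` stores. -/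
def St (α : Type) : ℕ → Type
  | 0 => List α
  | k + 1 => St α k × List (St α k)

/-- the `top₁` symbol of a store (`none` on an empty order-1 store) -/
def St.top1 {α : Type} : (k : ℕ) → St α k → Option α
  | 0, w => List.head? w
  | k + 1, s => St.top1 k s.1

/-- Stack operations: `pushw w` is `push_w` (with `pop₁ = push_ε`);
`push l` / `pop l` are `push_l` / `pop_l`. -/
inductive Op (α : Type) where
  | pushw : List α → Op α
  | push : ℕ → Op α
  | pop : ℕ → Op α

/-- `Op.Valid n o` says that `o` belongs to `O_n`. -/
def Op.Valid {α : Type} (n : ℕ) : Op α → Prop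
  | .pushw _ => True
  | .push l => 2 ≤ l ∧ l ≤ n
  | .pop l => 2 ≤ l ∧ l ≤ n

/-- partial application of a stack operation to an order-`(k+1)` store -/
def Op.apply {α : Type} : (k : ℕ) → Op α → St α k → Option (St α k)
  | 0, .pushw w, s =>
      match (s : List α) with
      | [] => none
      | _ :: t => some ((w ++ t : List α))
  | 0, .push _, _ => none
  | 0, .pop _, _ => none
  | k + 1, .pushw w, s =>
      (Op.apply k (.pushw w) s.1).map fun t' => ((t', s.2) : St α (k+1))
  | k + 1, .push l, s =>
      if l = k + 2 then some ((s.1, s.1 :: s.2) : St α (k+1))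
      else (Op.apply k (.push l) s.1).map fun t' => ((t', s.2) : St α (k+1))
  | k + 1, .pop l, s =>
      if l = k + 2 then
        match s.2 with
        | [] => none
        | r :: rs => some ((r, rs) : St α (k+1))
      else (Op.apply k (.pop l) s.1).map fun t' => ((t', s.2) : St α (k+1))

/-- configurations of an order-`(k+1)` pushdown system -/
abbrev PConf (P α : Type) (k : ℕ) := P × St α k

/-- one transition `⟨p,γ⟩ ↪ ⟨p',γ'⟩` of an order-`(k+1)` PDS with commands `D` -/
def PStep {P α : Type} {k : ℕ} (D : Set (P × α × Op α × P)) (c c' : PConf P α k) : Prop :=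
  ∃ a o, (c.1, a, o, c'.1) ∈ D ∧ St.top1 k c.2 = some a ∧ Op.apply k o c.2 = some c'.2

def PPreStar {P α : Type} {k : ℕ} (D : Set (P × α × Op α × P)) (C : Set (PConf P α k)) :
    Set (PConf P α k) :=
  {c | ∃ c' ∈ C, Relation.ReflTransGen (PStep D) c c'}

def PPrePlus {P α : Type} {k : ℕ} (D : Set (P × α × Op α × P)) (C : Set (PConf P α k)) :
    Set (PConf P α k) :=
  {c | ∃ c' ∈ C, Relation.TransGen (PStep D) c c'}

/-- configurations of an order-`(k+1)` alternating PDS; `none` is the undefined store `∇` -/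
abbrev AConf (P α : Type) (k : ℕ) := P × Option (St α k)

/-- `⟨p,γ⟩ ↪ C` for an APDS with commands `D ⊆ P × Σ × 2^(O_n × P)` -/
def AStep {P α : Type} {k : ℕ} (D : Set (P × α × Set (Op α × P)))
    (c : AConf P α k) (C : Set (AConf P α k)) : Prop :=
  ∃ p γ a OP, c = (p, some γ) ∧ (p, a, OP) ∈ D ∧ St.top1 k γ = some a ∧
    C = {c' | ∃ o p' δ, (o, p') ∈ OP ∧ Op.apply k o γ = some δ ∧ c' = (p', some δ)}
      ∪ {c' | (∃ o p', (o, p') ∈ OP ∧ Op.apply k o γ = none) ∧ c' = (p, none)}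

/-- extension of `↪` to sets of configurations -/
def ASetStep {P α : Type} {k : ℕ} (D : Set (P × α × Set (Op α × P)))
    (X Y : Set (AConf P α k)) : Prop :=
  ∃ c C C', AStep D c C ∧ c ∉ C' ∧ X = insert c C' ∧ Y = C' ∪ C

/-- `Pre*(C_Init)` for an APDS: the configurations `c` with `{c} ↪* C ⊆ C_Init` -/
def APreStar {P α : Type} {k : ℕ} (D : Set (P × α × Set (Op α × P)))
    (CI : Set (AConf P α k)) : Set (AConf P α k) :=
  {c | ∃ C, Relation.ReflTransGen (ASetStep D) {c} C ∧ C ⊆ CI}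

/-- one alternating step: choose one transition from every state of `S` and union the targets -/
def setStep {L : Type} (tr : ℕ → L → Set ℕ → Prop) (l : L) (S S' : Set ℕ) : Prop :=
  ∃ f : ℕ → Set ℕ, (∀ q ∈ S, tr q l (f q)) ∧ S' = ⋃ q ∈ S, f q

/-- alternating run over a word of labels -/
inductive listRun {L : Type} (tr : ℕ → L → Set ℕ → Prop) : List L → Set ℕ → Set ℕ → Prop
  | nil (S : Set ℕ) : listRun tr [] S S
  | cons {l : L} {ls : List L} {S S1 S2 : Set ℕ} :
      setStep tr l S S1 → listRun tr ls S1 S2 → listRun tr (l :: ls) S S2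

/-- Alternating order-`(k+1)` store automata: states drawn from `ℕ`, a finite list of
transitions labelled (at higher orders) by order-`k` store automata, an initial state,
and a finite list of final states. -/
def SA (α : Type) : ℕ → Type
  | 0 => List (ℕ × α × List ℕ) × ℕ × List ℕ
  | k + 1 => List (ℕ × SA α k × List ℕ) × ℕ × List ℕ

/-- the initial state of a store automaton -/
def SA.init {α : Type} : (k : ℕ) → SA α k → ℕ
  | 0, A => A.2.1
  | _ + 1, A => A.2.1

/-- acceptance of an order-`(k+1)` store from state `q`: an alternating run over the
word of (sub)stores ending in a set of final states, where at each step every label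
must accept the store being read -/
def SA.accFrom {α : Type} : (k : ℕ) → SA α k → ℕ → St α k → Prop
  | 0, A, q, w =>
      ∃ S, listRun (fun q' a T => ∃ L, (q', a, L) ∈ A.1 ∧ T = {x | x ∈ L})
          (w : List α) {q} S ∧
        S ⊆ {x | x ∈ A.2.2}
  | k + 1, A, q, s =>
      ∃ S,
        listRun
          (fun q' γ T => ∃ B L, (q', B, L) ∈ A.1 ∧ SA.accFrom k B (SA.init k B) γ ∧
            T = {x | x ∈ L})
          (s.1 :: s.2) {q} S ∧
        S ⊆ {x | x ∈ A.2.2}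

/-- acceptance from the initial state -/
def SA.acc {α : Type} {k : ℕ} (A : SA α k) (s : St α k) : Prop :=
  SA.accFrom k A (SA.init k A) s

/-- size of a store automaton (transitions counted recursively) -/
def SA.size {α : Type} : (k : ℕ) → SA α k → ℕ
  | 0, A => A.1.length + A.2.2.length + 1
  | k + 1, A =>
      (A.1.map fun t => SA.size k t.2.1 + t.2.2.length + 1).sum + A.2.2.length + 1

/-- An order-`(k+1)`-store multi-automaton: a shared store automaton together with
one initial state per control state, and possible `∇`-transitions (`nabla p` holds iff
there is a transition `q^p —∇→ {q^ε_f}`). -/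
structure MSA (α P : Type) (k : ℕ) where
  core : SA α k
  inits : P → ℕ
  nabla : Set P

/-- the set of configurations accepted by a multi-automaton -/
def MSA.Lang {α P : Type} {k : ℕ} (M : MSA α P k) : Set (AConf P α k) :=
  {c | (∃ s, c.2 = some s ∧ SA.accFrom k M.core (M.inits c.1) s) ∨
       (c.2 = none ∧ c.1 ∈ M.nabla)}

def MSA.size {α P : Type} {k : ℕ} (M : MSA α P k) : ℕ := SA.size k M.core

/-- regular sets of configurations: those recognised by a store multi-automaton -/
def Regular {α P : Type} {k : ℕ} (C : Set (AConf P α k)) : Prop :=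
  ∃ M : MSA α P k, M.Lang = C

/-- tower of exponentials: `tower n x = exp_n(x)` -/
def tower : ℕ → ℕ → ℕ
  | 0, x => x
  | n + 1, x => 2 ^ tower n x

/-- Büchi acceptance: an infinite run visiting accepting control states infinitely often -/
def BuchiAcc {P α : Type} {k : ℕ} (D : Set (P × α × Op α × P)) (F : Set P)
    (c : PConf P α k) : Prop :=
  ∃ r : ℕ → PConf P α k,
    r 0 = c ∧ (∀ i, PStep D (r i) (r (i + 1))) ∧ ∀ i, ∃ j, i ≤ j ∧ (r j).1 ∈ F

/-- the store `[^n a]^n` (each level a singleton) -/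
def unitSt {α : Type} (a : α) : (k : ℕ) → St α k
  | 0 => [a]
  | k + 1 => ((unitSt a k, []) : St α (k+1))

/-- Eloise's attractor for a reachability game with step relation `step`,
Eloise-owned configurations `E` and target set `R`:  `Attr_E(R) = ⋃ᵢ Attrⁱ_E(R)`. -/
def AttrE {C : Type} (step : C → C → Prop) (E : Set C) (R : Set C) : Set C :=
  ⋃ i,
    (fun X => X ∪ {c | c ∈ E ∧ ∃ c', step c c' ∧ c' ∈ X}
                ∪ {c | c ∉ E ∧ ∀ c', step c c' → c' ∈ X})^[i] R

end HOPDS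

namespace HOPDS

/-- totality of a store automaton: required only at order 1 (`k = 0`), where every state
must have a transition for every letter; vacuous at higher orders. -/
def SA.IsTotal {α : Type} : (k : ℕ) → SA α k → Prop
  | 0, A => ∀ (q : ℕ) (a : α), ∃ L, (q, a, L) ∈ A.1
  | _ + 1, _ => True

end HOPDS

/-!
A state `q` accepts `γ w` iff some transition `(q, B, L)` with `γ ⊨ B` has all its targets
accepting `w`. Negating and distributing turns this into a disjunction, over the set `B̃` of
transitions whose labels hold at `γ` and over the choices of one target in each member of `B̃`, of
"all chosen targets reject `w`": these are the transitions of `Ā` (at order 1 the letter `γ`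
determines `B̃`). By induction on the word, each state of `A` then accepts in `Ā` exactly what it
rejects in `A`. The labels of `Ā` are intersections of labels of `A` and of their complements,
available by induction on the order; states not occurring in `A` reject everything and are sent
to a fresh state of `Ā` that accepts everything.

Every label of `A` is smaller than `A`, so with `N = |A| + |Σ| + 2` the complements of the labels
have size at most `2 ^ N ^ c`, and intersections of at most `N` of them size `2 ^ N ^ (c + O(1))`:
the exponent grows by a constant at each order, which gives `|Ā| ≤ 2 ^ N ^ (8 k + 5)`.
-/

namespace List

theorem exists_mem_sections_forall_iff {β : Type*} {P : β → Prop} :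
    ∀ {L : List (List β)}, (∃ s ∈ L.sections, ∀ y ∈ s, P y) ↔ ∀ l ∈ L, ∃ y ∈ l, P y
  | [] => by simp [sections]
  | l :: L => by
    simp only [sections, mem_flatMap, mem_map, forall_mem_cons]
    rw [← exists_mem_sections_forall_iff]
    constructor
    · rintro ⟨_, ⟨s, hs, y, hy, rfl⟩, hP⟩
      simp only [forall_mem_cons] at hP
      exact ⟨⟨y, hy, hP.1⟩, s, hs, hP.2⟩
    · rintro ⟨⟨y, hy, hPy⟩, s, hs, hP⟩
      exact ⟨_, ⟨s, hs, y, hy, rfl⟩, forall_mem_cons.2 ⟨hPy, hP⟩⟩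

theorem length_sections {β : Type*} : ∀ L : List (List β), L.sections.length = (L.map length).prod
  | [] => rfl
  | l :: L => by
    simp [sections, length_flatMap, length_sections L, mul_comm]

theorem sum_map_flatMap {β γ : Type*} (l : List β) (f : β → List γ) (c : γ → ℕ) :
    ((l.flatMap f).map c).sum = (l.map fun x => ((f x).map c).sum).sum := by
  induction l <;> simp_all

theorem sum_map_filterMap_le {β γ : Type*} {l : List β} {g : β → Option γ} {c : γ → ℕ}
    {c' : β → ℕ} (h : ∀ x ∈ l, ∀ y, g x = some y → c y ≤ c' x) :
    ((l.filterMap g).map c).sum ≤ (l.map c').sum := by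
  induction l with
  | nil => simp
  | cons x l ih =>
    rw [forall_mem_cons] at h
    have := ih h.2
    cases hx : g x with
    | none => simp only [filterMap_cons, hx, map_cons, sum_cons]; omega
    | some y => simp only [filterMap_cons, hx, map_cons, sum_cons]; have := h.1 y hx; omega

end List

section TwoPowPow

variable {N : ℕ}

theorem le_two_pow_pow_of_le_pow {x e : ℕ} (h : x ≤ N ^ e) : x ≤ 2 ^ N ^ e :=
  h.trans Nat.lt_two_pow_self.le

theorem two_pow_pow_mono (hN : 1 ≤ N) {e e' : ℕ} (h : e ≤ e') : 2 ^ N ^ e ≤ 2 ^ N ^ e' :=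
  Nat.pow_le_pow_right two_pos (Nat.pow_le_pow_right hN h)

theorem two_mul_pow_le_pow_succ (hN : 2 ≤ N) (e : ℕ) : 2 * N ^ e ≤ N ^ (e + 1) := by
  rw [pow_succ, mul_comm]
  exact Nat.mul_le_mul_left _ hN

theorem mul_le_two_pow_pow_succ (hN : 2 ≤ N) {x y e : ℕ} (hx : x ≤ 2 ^ N ^ e)
    (hy : y ≤ 2 ^ N ^ e) : x * y ≤ 2 ^ N ^ (e + 1) :=
  calc x * y ≤ 2 ^ N ^ e * 2 ^ N ^ e := Nat.mul_le_mul hx hy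
    _ = 2 ^ (2 * N ^ e) := by rw [← pow_add, two_mul]
    _ ≤ 2 ^ N ^ (e + 1) := Nat.pow_le_pow_right two_pos (two_mul_pow_le_pow_succ hN e)

theorem add_le_two_pow_pow_succ (hN : 2 ≤ N) {x y e : ℕ} (hx : x ≤ 2 ^ N ^ e)
    (hy : y ≤ 2 ^ N ^ e) : x + y ≤ 2 ^ N ^ (e + 1) := by
  have h1 : 2 ≤ 2 ^ N ^ e := Nat.le_self_pow (pow_pos (by omega) e).ne' 2
  have := mul_le_two_pow_pow_succ hN (x := 2 ^ N ^ e) (y := 2 ^ N ^ e) le_rfl le_rfl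
  nlinarith

theorem sum_le_two_pow_pow_succ (hN : 2 ≤ N) {l : List ℕ} {e : ℕ} (hlen : l.length ≤ 2 ^ N ^ e)
    (h : ∀ x ∈ l, x ≤ 2 ^ N ^ e) : l.sum ≤ 2 ^ N ^ (e + 1) :=
  (List.sum_le_card_nsmul l _ h).trans (mul_le_two_pow_pow_succ hN hlen le_rfl)

theorem prod_le_two_pow_pow_add {l : List ℕ} {e e' : ℕ} (hlen : l.length ≤ N ^ e')
    (h : ∀ x ∈ l, x ≤ 2 ^ N ^ e) : l.prod ≤ 2 ^ N ^ (e + e') :=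
  calc l.prod ≤ (2 ^ N ^ e) ^ l.length := List.prod_le_pow_card l _ h
    _ ≤ 2 ^ N ^ (e + e') := by
      rw [← pow_mul, pow_add]
      exact Nat.pow_le_pow_right two_pos (Nat.mul_le_mul_left _ hlen)

theorem le_two_pow_pow_self (hN : 2 ≤ N) (x : ℕ) : x ≤ 2 ^ N ^ x :=
  le_two_pow_pow_of_le_pow (Nat.lt_two_pow_self.le.trans (Nat.pow_le_pow_left hN x))

end TwoPowPow

namespace HOPDS

/-- Transitions, initial state and final states: `SA α 0` is `Aut α` and `SA α (k + 1)` is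
`Aut (SA α k)`. -/
abbrev Aut (Lab : Type) := List (ℕ × Lab × List ℕ) × ℕ × List ℕ

section Alternating

variable {Γ Lab : Type}

def Accepts (sat : Lab → Γ → Prop) (A : Aut Lab) : List Γ → ℕ → Prop
  | [], q => q ∈ A.2.2
  | γ :: w, q => ∃ B L, (q, B, L) ∈ A.1 ∧ sat B γ ∧ ∀ q' ∈ L, Accepts sat A w q'

variable {sat : Lab → Γ → Prop}

theorem accepts_of_listRun {A : Aut Lab} {tr : ℕ → Γ → Set ℕ → Prop}
    (htr : ∀ q γ T, tr q γ T → ∃ B L, (q, B, L) ∈ A.1 ∧ sat B γ ∧ T = {x | x ∈ L})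
    {w : List Γ} {S₀ S : Set ℕ} (hrun : listRun tr w S₀ S) (hS : S ⊆ {x | x ∈ A.2.2}) :
    ∀ q ∈ S₀, Accepts sat A w q := by
  induction hrun with
  | nil => exact hS
  | cons hstep _ ih =>
    obtain ⟨f, hf, rfl⟩ := hstep
    intro q hq
    obtain ⟨B, L, hmem, hsat, hT⟩ := htr _ _ _ (hf q hq)
    exact ⟨B, L, hmem, hsat, fun q' hq' => ih hS q' (Set.mem_biUnion hq (hT ▸ hq'))⟩

theorem exists_listRun_of_accepts {A : Aut Lab} {tr : ℕ → Γ → Set ℕ → Prop}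
    (htr : ∀ q γ B L, (q, B, L) ∈ A.1 → sat B γ → tr q γ {x | x ∈ L}) :
    ∀ (w : List Γ) (S₀ : Set ℕ), S₀.Finite → (∀ q ∈ S₀, Accepts sat A w q) →
      ∃ S, listRun tr w S₀ S ∧ S ⊆ {x | x ∈ A.2.2}
  | [], S₀, _, h => ⟨S₀, listRun.nil S₀, h⟩
  | γ :: w, S₀, hfin, h => by
    classical
    choose B L hmem hsat hacc using h
    let f : ℕ → Set ℕ := fun q => if hq : q ∈ S₀ then {x | x ∈ L q hq} else ∅
    have hstep : setStep tr γ S₀ (⋃ q ∈ S₀, f q) :=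
      ⟨f, fun q hq => by simpa [f, hq] using htr _ _ _ _ (hmem q hq) (hsat q hq), rfl⟩
    have hfin' : (⋃ q ∈ S₀, f q).Finite :=
      hfin.biUnion fun q hq => by simp [f, hq]
    have hacc' : ∀ q' ∈ ⋃ q ∈ S₀, f q, Accepts sat A w q' := by
      simp only [Set.mem_iUnion]
      rintro q' ⟨q, hq, hq'⟩
      simp only [f, hq, dite_true] at hq'
      exact hacc q hq q' hq'
    obtain ⟨S, hrun, hS⟩ := exists_listRun_of_accepts htr w _ hfin' hacc'
    exact ⟨S, listRun.cons hstep hrun, hS⟩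

theorem exists_listRun_iff_accepts {A : Aut Lab} {tr : ℕ → Γ → Set ℕ → Prop}
    (htr : ∀ q γ T, tr q γ T ↔ ∃ B L, (q, B, L) ∈ A.1 ∧ sat B γ ∧ T = {x | x ∈ L})
    {w : List Γ} {q : ℕ} :
    (∃ S, listRun tr w {q} S ∧ S ⊆ {x | x ∈ A.2.2}) ↔ Accepts sat A w q :=
  ⟨fun ⟨_, hrun, hS⟩ => accepts_of_listRun (fun q γ T => (htr q γ T).1) hrun hS q rfl,
    fun h => exists_listRun_of_accepts (sat := sat)
      (fun q γ B L hmem hsat => (htr _ _ _).2 ⟨B, L, hmem, hsat, rfl⟩)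
      w {q} (Set.finite_singleton q) (by rintro _ rfl; exact h)⟩

end Alternating

theorem SA.accFrom_zero_iff {α : Type} (A : SA α 0) (q : ℕ) (w : St α 0) :
    SA.accFrom 0 A q w ↔ Accepts (· = ·) A w q :=
  exists_listRun_iff_accepts fun _ a _ =>
    ⟨fun ⟨L, hmem, hT⟩ => ⟨a, L, hmem, rfl, hT⟩, fun ⟨_, L, hmem, hsat, hT⟩ => ⟨L, hsat ▸ hmem, hT⟩⟩

theorem SA.accFrom_succ_iff {α : Type} {k : ℕ} (A : SA α (k + 1)) (q : ℕ) (s : St α (k + 1)) :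
    SA.accFrom (k + 1) A q s ↔ Accepts SA.acc A (s.1 :: s.2) q :=
  exists_listRun_iff_accepts fun _ _ _ => Iff.rfl

namespace Aut

variable {Γ Lab Lab' : Type} {sat : Lab → Γ → Prop} {sat' : Lab' → Γ → Prop}

def live (A : Aut Lab) : List ℕ := A.1.map (·.1) ++ A.2.2

def states (A : Aut Lab) : List ℕ := A.2.1 :: (A.1.flatMap fun t => t.1 :: t.2.2) ++ A.2.2

def fresh (A : Aut Lab) : ℕ := A.states.sum + 1

theorem lt_fresh {A : Aut Lab} {q : ℕ} (hq : q ∈ A.states) : q < A.fresh :=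
  Nat.lt_succ_of_le (List.le_sum_of_mem hq)

theorem init_mem_states (A : Aut Lab) : A.2.1 ∈ A.states := List.mem_cons_self

theorem tgt_mem_states {A : Aut Lab} {q : ℕ} {B : Lab} {L : List ℕ} (ht : (q, B, L) ∈ A.1)
    {y : ℕ} (hy : y ∈ L) : y ∈ A.states := by
  simp only [states, List.mem_cons, List.mem_append, List.mem_flatMap]
  exact Or.inl (Or.inr ⟨_, ht, Or.inr hy⟩)

theorem live_subset_states (A : Aut Lab) : A.live ⊆ A.states := by
  intro q
  simp only [live, states, List.mem_cons, List.mem_append, List.mem_map, List.mem_flatMap]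
  rintro (⟨t, ht, rfl⟩ | hq)
  · exact Or.inl (Or.inr ⟨t, ht, Or.inl rfl⟩)
  · exact Or.inr hq

theorem mem_live_of_accepts {A : Aut Lab} {w : List Γ} {q : ℕ} (h : Accepts sat A w q) :
    q ∈ A.live := by
  cases w with
  | nil => exact List.mem_append_right _ h
  | cons γ w =>
    obtain ⟨B, L, hmem, -⟩ := h
    exact List.mem_append_left _ (List.mem_map.2 ⟨_, hmem, rfl⟩)

theorem mem_states_of_accepts {A : Aut Lab} {w : List Γ} {q : ℕ} (h : Accepts sat A w q) :
    q ∈ A.states :=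
  live_subset_states A (mem_live_of_accepts h)

theorem accepts_map_iff {A A' : Aut Lab} {f : ℕ → ℕ}
    (htrans : ∀ q B L', (f q, B, L') ∈ A'.1 ↔ ∃ L, (q, B, L) ∈ A.1 ∧ L' = L.map f)
    (hfin : ∀ q, f q ∈ A'.2.2 ↔ q ∈ A.2.2) :
    ∀ (w : List Γ) (q : ℕ), Accepts sat A' w (f q) ↔ Accepts sat A w q
  | [], q => hfin q
  | γ :: w, q => by
    simp only [Accepts, htrans]
    constructor
    · rintro ⟨B, _, ⟨L, hmem, rfl⟩, hsat, hacc⟩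
      exact ⟨B, L, hmem, hsat, fun y hy =>
        (accepts_map_iff htrans hfin w y).1 (hacc _ (List.mem_map_of_mem hy))⟩
    · rintro ⟨B, L, hmem, hsat, hacc⟩
      refine ⟨B, _, ⟨L, hmem, rfl⟩, hsat, ?_⟩
      simp only [List.mem_map]
      rintro _ ⟨y, hy, rfl⟩
      exact (accepts_map_iff htrans hfin w y).2 (hacc y hy)

/-- `trans q` is a disjunctive normal form of the negation of the one-step acceptance condition
of `q` in `A`, read as a formula in the acceptance of the targets. -/
def DualTrans (sat : Lab → Γ → Prop) (sat' : Lab' → Γ → Prop) (A : Aut Lab)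
    (trans : ℕ → List (Lab' × List ℕ)) : Prop :=
  ∀ q γ (P : ℕ → Prop), (∃ l L, (l, L) ∈ trans q ∧ sat' l γ ∧ ∀ y ∈ L, P y) ↔
    ∀ B L, (q, B, L) ∈ A.1 → sat B γ → ∃ y ∈ L, P y

def complWith (A : Aut Lab) (trans : ℕ → List (Lab' × List ℕ)) (univ : List Lab') : Aut Lab' :=
  ((A.states.flatMap fun q => (trans q).map fun x => (q, x)) ++ univ.map fun l => (A.fresh, l, []),
    A.2.1, A.fresh :: A.states.filter (· ∉ A.2.2))

/-- States not occurring in `A` accept nothing; in the complement they all become the fresh state,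
which accepts everything. -/
def complInit (A : Aut Lab) (q : ℕ) : ℕ := if q ∈ A.states then q else A.fresh

theorem complInit_init (A : Aut Lab) : A.complInit A.2.1 = A.2.1 :=
  if_pos A.init_mem_states

section complWith

variable {A : Aut Lab} {trans : ℕ → List (Lab' × List ℕ)} {univ : List Lab'}

theorem accepts_complWith_fresh (huniv : ∀ γ, ∃ l ∈ univ, sat' l γ) :
    ∀ w : List Γ, Accepts sat' (A.complWith trans univ) w A.fresh
  | [] => List.mem_cons_self
  | γ :: _ =>
    have ⟨l, hl, hsat⟩ := huniv γ
    ⟨l, [], List.mem_append_right _ (List.mem_map_of_mem hl), hsat, by simp⟩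

theorem mem_complWith_iff {q : ℕ} (hq : q ∈ A.states) {l : Lab'} {L : List ℕ} :
    (q, l, L) ∈ (A.complWith trans univ).1 ↔ (l, L) ∈ trans q := by
  have := (lt_fresh hq).ne
  simp only [complWith, List.mem_append, List.mem_flatMap, List.mem_map, Prod.mk.injEq]
  constructor
  · rintro (⟨q', -, x, hx, rfl, rfl⟩ | ⟨_, -, h, -⟩)
    · exact hx
    · exact absurd h.symm this
  · exact fun h => Or.inl ⟨q, hq, (l, L), h, rfl, rfl⟩

theorem accepts_complWith_iff (hdual : DualTrans sat sat' A trans) :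
    ∀ (w : List Γ) {q : ℕ}, q ∈ A.states →
      (Accepts sat' (A.complWith trans univ) w q ↔ ¬ Accepts sat A w q)
  | [], q, hq => by
    have := (lt_fresh hq).ne
    simp [Accepts, complWith, hq, this]
  | γ :: w, q, hq => by
    simp only [Accepts, mem_complWith_iff hq]
    rw [hdual]
    push Not
    refine forall₂_congr fun B L => imp_congr_right fun hmem => imp_congr_right fun _ => ?_
    exact exists_congr fun y => and_congr_right fun hy =>
      accepts_complWith_iff hdual w (tgt_mem_states hmem hy)

theorem accepts_complWith_complInit (hdual : DualTrans sat sat' A trans)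
    (huniv : ∀ γ, ∃ l ∈ univ, sat' l γ) (w : List Γ) (q : ℕ) :
    Accepts sat' (A.complWith trans univ) w (A.complInit q) ↔ ¬ Accepts sat A w q := by
  unfold complInit
  split_ifs with hq
  · exact accepts_complWith_iff hdual w hq
  · exact iff_of_true (accepts_complWith_fresh huniv w) fun h => hq (mem_states_of_accepts h)

end complWith

/-- Afterwards every target list is at most as long as `A.live`; this matters because the size of
an order-1 store automaton does not count targets. -/
def prune (A : Aut Lab) : Aut Lab :=
  (A.1.filterMap fun t => if t.2.2 ⊆ A.live then some (t.1, t.2.1, t.2.2.dedup) else none,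
    A.2.1, A.2.2)

theorem mem_prune_iff {A : Aut Lab} {q : ℕ} {B : Lab} {L' : List ℕ} :
    (q, B, L') ∈ A.prune.1 ↔ ∃ L, (q, B, L) ∈ A.1 ∧ L ⊆ A.live ∧ L' = L.dedup := by
  simp only [prune, List.mem_filterMap, Option.ite_none_right_eq_some, Option.some.injEq,
    Prod.mk.injEq]
  constructor
  · rintro ⟨t, ht, hsub, rfl, rfl, rfl⟩
    exact ⟨t.2.2, ht, hsub, rfl⟩
  · rintro ⟨L, hmem, hsub, rfl⟩
    exact ⟨_, hmem, hsub, rfl, rfl, rfl⟩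

theorem accepts_prune_iff {A : Aut Lab} :
    ∀ (w : List Γ) (q : ℕ), Accepts sat A.prune w q ↔ Accepts sat A w q
  | [], _ => Iff.rfl
  | γ :: w, q => by
    simp only [Accepts, mem_prune_iff, accepts_prune_iff w]
    constructor
    · rintro ⟨B, _, ⟨L, hmem, -, rfl⟩, hsat, hacc⟩
      exact ⟨B, L, hmem, hsat, fun y hy => hacc y (List.mem_dedup.2 hy)⟩
    · rintro ⟨B, L, hmem, hsat, hacc⟩
      exact ⟨B, _, ⟨L, hmem, fun y hy => mem_live_of_accepts (hacc y hy), rfl⟩, hsat,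
        fun y hy => hacc y (List.mem_dedup.1 hy)⟩

theorem length_le_of_mem_prune {A : Aut Lab} {t : ℕ × Lab × List ℕ} (ht : t ∈ A.prune.1) :
    t.2.2.length ≤ A.live.length := by
  obtain ⟨L, -, hsub, hL⟩ := mem_prune_iff.1 (show (t.1, t.2.1, t.2.2) ∈ A.prune.1 from ht)
  rw [hL]
  exact (List.nodup_dedup L).length_le_of_subset fun y hy => hsub (List.mem_dedup.1 hy)

def leftState (q : ℕ) : ℕ := 2 * q + 1

def rightState (q : ℕ) : ℕ := 2 * q + 2

def relabel (f : ℕ → ℕ) (t : ℕ × Lab × List ℕ) : ℕ × Lab × List ℕ := (f t.1, t.2.1, t.2.2.map f)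

/-- In the product of `A` and `B`, the states of `A` and `B` are renamed apart to odd and even
numbers and `0` is the new initial state. -/
def interInit (meet : Lab → Lab → Option Lab) (A B : Aut Lab) : List (ℕ × Lab × List ℕ) :=
  A.1.flatMap fun s => B.1.filterMap fun t =>
    if s.1 = A.2.1 ∧ t.1 = B.2.1 then
      (meet s.2.1 t.2.1).map fun c => (0, c, s.2.2.map leftState ++ t.2.2.map rightState)
    else none

def inter (meet : Lab → Lab → Option Lab) (A B : Aut Lab) : Aut Lab :=
  (interInit meet A B ++ A.1.map (relabel leftState) ++ B.1.map (relabel rightState),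
   0,
   (if A.2.1 ∈ A.2.2 ∧ B.2.1 ∈ B.2.2 then [0] else []) ++ A.2.2.map leftState
     ++ B.2.2.map rightState)

section inter

variable {meet : Lab → Lab → Option Lab} {A B : Aut Lab}

theorem mem_inter_leftState {q : ℕ} {c : Lab} {L' : List ℕ} :
    (leftState q, c, L') ∈ (A.inter meet B).1 ↔ ∃ L, (q, c, L) ∈ A.1 ∧ L' = L.map leftState := by
  simp only [inter, interInit, relabel, leftState, rightState, List.mem_append, List.mem_flatMap,
    List.mem_filterMap, List.mem_map, Prod.mk.injEq]
  constructor
  · rintro ((⟨s, -, t, -, h⟩ | ⟨t, ht, h1, rfl, rfl⟩) | ⟨t, -, h, -⟩)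
    · split_ifs at h
      simp_all
    · exact ⟨t.2.2, by rwa [← show t.1 = q by omega], rfl⟩
    · omega
  · rintro ⟨L, hmem, rfl⟩
    exact Or.inl (Or.inr ⟨_, hmem, rfl, rfl, rfl⟩)

theorem mem_inter_rightState {q : ℕ} {c : Lab} {L' : List ℕ} :
    (rightState q, c, L') ∈ (A.inter meet B).1 ↔ ∃ L, (q, c, L) ∈ B.1 ∧ L' = L.map rightState := by
  simp only [inter, interInit, relabel, leftState, rightState, List.mem_append, List.mem_flatMap,
    List.mem_filterMap, List.mem_map, Prod.mk.injEq]
  constructor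
  · rintro ((⟨s, -, t, -, h⟩ | ⟨t, -, h, -⟩) | ⟨t, ht, h1, rfl, rfl⟩)
    · split_ifs at h
      simp_all
    · omega
    · exact ⟨t.2.2, by rwa [← show t.1 = q by omega], rfl⟩
  · rintro ⟨L, hmem, rfl⟩
    exact Or.inr ⟨_, hmem, rfl, rfl, rfl⟩

theorem mem_inter_zero {c : Lab} {L' : List ℕ} :
    (0, c, L') ∈ (A.inter meet B).1 ↔ ∃ c₁ L₁ c₂ L₂, (A.2.1, c₁, L₁) ∈ A.1 ∧ (B.2.1, c₂, L₂) ∈ B.1 ∧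
      meet c₁ c₂ = some c ∧ L' = L₁.map leftState ++ L₂.map rightState := by
  simp only [inter, interInit, relabel, leftState, rightState, List.mem_append, List.mem_flatMap,
    List.mem_filterMap, List.mem_map, Prod.mk.injEq]
  constructor
  · rintro ((⟨s, hs, t, ht, h⟩ | ⟨t, -, h, -⟩) | ⟨t, -, h, -⟩)
    · split_ifs at h with hst
      · obtain ⟨c', hc', h⟩ := Option.map_eq_some_iff.1 h
        simp only [Prod.mk.injEq] at h
        obtain ⟨-, rfl, rfl⟩ := h
        exact ⟨_, _, _, _, hst.1 ▸ hs, hst.2 ▸ ht, hc', rfl⟩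
    · omega
    · omega
  · rintro ⟨c₁, L₁, c₂, L₂, h₁, h₂, hc, rfl⟩
    exact Or.inl (Or.inl ⟨_, h₁, _, h₂, by simp [hc]⟩)

theorem leftState_mem_inter_fin {q : ℕ} : leftState q ∈ (A.inter meet B).2.2 ↔ q ∈ A.2.2 := by
  simp only [inter, leftState, rightState, List.mem_append, List.mem_map]
  constructor
  · rintro ((h | ⟨x, hx, h⟩) | ⟨x, -, h⟩)
    · split_ifs at h <;> simp_all
    · rwa [show x = q by omega] at hx
    · omega
  · exact fun h => Or.inl (Or.inr ⟨q, h, rfl⟩)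

theorem rightState_mem_inter_fin {q : ℕ} : rightState q ∈ (A.inter meet B).2.2 ↔ q ∈ B.2.2 := by
  simp only [inter, leftState, rightState, List.mem_append, List.mem_map]
  constructor
  · rintro ((h | ⟨x, -, h⟩) | ⟨x, hx, h⟩)
    · split_ifs at h <;> simp_all
    · omega
    · rwa [show x = q by omega] at hx
  · exact fun h => Or.inr ⟨q, h, rfl⟩

theorem accepts_inter (hmeet : ∀ a b γ, (∃ c, meet a b = some c ∧ sat c γ) ↔ sat a γ ∧ sat b γ)
    (w : List Γ) :
    Accepts sat (A.inter meet B) w 0 ↔ Accepts sat A w A.2.1 ∧ Accepts sat B w B.2.1 := by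
  have hA := accepts_map_iff (sat := sat) (A' := A.inter meet B)
    (fun _ _ _ => mem_inter_leftState) fun _ => leftState_mem_inter_fin
  have hB := accepts_map_iff (sat := sat) (A' := A.inter meet B)
    (fun _ _ _ => mem_inter_rightState) fun _ => rightState_mem_inter_fin
  cases w with
  | nil => simp [Accepts, inter, leftState, rightState]
  | cons γ w =>
    simp only [Accepts, mem_inter_zero]
    constructor
    · rintro ⟨c, _, ⟨c₁, L₁, c₂, L₂, h₁, h₂, hc, rfl⟩, hsat, hacc⟩
      obtain ⟨hsat₁, hsat₂⟩ := (hmeet c₁ c₂ γ).1 ⟨c, hc, hsat⟩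
      simp only [List.mem_append, List.mem_map] at hacc
      exact ⟨⟨c₁, L₁, h₁, hsat₁, fun y hy => (hA w y).1 (hacc _ (Or.inl ⟨y, hy, rfl⟩))⟩,
        ⟨c₂, L₂, h₂, hsat₂, fun y hy => (hB w y).1 (hacc _ (Or.inr ⟨y, hy, rfl⟩))⟩⟩
    · rintro ⟨⟨c₁, L₁, h₁, hsat₁, hacc₁⟩, ⟨c₂, L₂, h₂, hsat₂, hacc₂⟩⟩
      obtain ⟨c, hc, hsat⟩ := (hmeet c₁ c₂ γ).2 ⟨hsat₁, hsat₂⟩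
      refine ⟨c, _, ⟨c₁, L₁, c₂, L₂, h₁, h₂, hc, rfl⟩, hsat, ?_⟩
      simp only [List.mem_append, List.mem_map]
      rintro _ (⟨y, hy, rfl⟩ | ⟨y, hy, rfl⟩)
      exacts [(hA w y).2 (hacc₁ y hy), (hB w y).2 (hacc₂ y hy)]

end inter

end Aut

namespace SA

variable {α : Type}

theorem acc_zero_iff (A : SA α 0) (w : St α 0) : A.acc w ↔ Accepts (· = ·) A w A.2.1 :=
  accFrom_zero_iff A _ w

theorem acc_succ_iff {k : ℕ} (A : SA α (k + 1)) (s : St α (k + 1)) :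
    A.acc s ↔ Accepts SA.acc A (s.1 :: s.2) A.2.1 :=
  accFrom_succ_iff A _ s

def univ (la : List α) : (k : ℕ) → SA α k
  | 0 => (la.map fun a => (0, a, []), 0, [0])
  | k + 1 => ([(0, univ la k, [])], 0, [0])

theorem acc_univ {la : List α} (hla : ∀ a, a ∈ la) : ∀ (k : ℕ) (s : St α k), (univ la k).acc s
  | 0, [] => (acc_zero_iff _ _).2 List.mem_cons_self
  | 0, a :: _ => (acc_zero_iff _ _).2 ⟨a, [], List.mem_map_of_mem (hla a), rfl, by simp⟩
  | k + 1, s =>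
    (acc_succ_iff _ _).2 ⟨univ la k, [], List.mem_cons_self, acc_univ hla k s.1, by simp⟩

open Classical in
noncomputable def inter : (k : ℕ) → SA α k → SA α k → SA α k
  | 0, A, B => Aut.inter (fun a b => if a = b then some a else none) A B
  | k + 1, A, B => Aut.inter (fun C D => some (inter k C D)) A B

theorem acc_inter : ∀ (k : ℕ) (A B : SA α k) (s : St α k),
    (inter k A B).acc s ↔ A.acc s ∧ B.acc s
  | 0, A, B, w => by
    simp only [acc_zero_iff]
    exact Aut.accepts_inter (fun a b γ => by split_ifs with h <;> grind) w
  | k + 1, A, B, s => by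
    simp only [acc_succ_iff]
    exact Aut.accepts_inter (fun C D γ => by simp [acc_inter k C D γ]) _

noncomputable def interList (la : List α) (k : ℕ) (Bs : List (SA α k)) : SA α k :=
  Bs.foldr (inter k) (univ la k)

theorem acc_interList {la : List α} (hla : ∀ a, a ∈ la) {k : ℕ} (s : St α k) :
    ∀ Bs : List (SA α k), (interList la k Bs).acc s ↔ ∀ B ∈ Bs, B.acc s
  | [] => by simpa [interList] using acc_univ hla k s
  | B :: Bs => by
    rw [show interList la k (B :: Bs) = inter k B (interList la k Bs) from rfl, acc_inter,
      acc_interList hla s Bs, List.forall_mem_cons]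

open Classical in
noncomputable def complTransZero (la : List α) (A : Aut α) (q : ℕ) : List (α × List ℕ) :=
  la.flatMap fun a => ((A.1.filter fun t => t.1 = q ∧ t.2.1 = a).map (·.2.2)).sections.map (a, ·)

theorem dualTrans_complTransZero {la : List α} (hla : ∀ a, a ∈ la) (A : Aut α) :
    Aut.DualTrans (· = ·) (· = ·) A (complTransZero la A) := by
  classical
  intro q γ P
  simp only [complTransZero, List.mem_flatMap, List.mem_map, Prod.mk.injEq]
  constructor
  · rintro ⟨_, L, ⟨a, -, L, hL, rfl, rfl⟩, rfl, hP⟩ B L' hmem rfl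
    exact List.exists_mem_sections_forall_iff.1 ⟨L, hL, hP⟩ L' (by simp [hmem])
  · intro h
    have hLs : ∀ l ∈ (A.1.filter fun t => t.1 = q ∧ t.2.1 = γ).map (·.2.2), ∃ y ∈ l, P y := by
      simp only [List.forall_mem_map, List.mem_filter, decide_eq_true_eq]
      rintro ⟨q', B, L⟩ ⟨hmem, rfl, rfl⟩
      exact h B L hmem rfl
    obtain ⟨L, hL, hP⟩ := List.exists_mem_sections_forall_iff.2 hLs
    exact ⟨γ, L, ⟨γ, hla γ, L, hL, rfl, rfl⟩, rfl, hP⟩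

open Classical in
/-- `S` is the paper's `B̃`: the transitions from `q` whose labels are required to hold. -/
noncomputable def complTransSucc {k : ℕ} (la : List α) (compl : SA α k → SA α k)
    (A : Aut (SA α k)) (q : ℕ) : List (SA α k × List ℕ) :=
  let Ts := A.1.filter (·.1 = q)
  Ts.sublists.flatMap fun S => (S.map (·.2.2)).sections.map fun pick =>
    (interList la k (Ts.map fun t => if t ∈ S then t.2.1 else compl t.2.1), pick)

theorem dualTrans_complTransSucc {la : List α} (hla : ∀ a, a ∈ la) {k : ℕ}
    {compl : SA α k → SA α k} (hcompl : ∀ B s, (compl B).acc s ↔ ¬ B.acc s) (A : Aut (SA α k)) :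
    Aut.DualTrans SA.acc SA.acc A (complTransSucc la compl A) := by
  classical
  intro q γ P
  set Ts := A.1.filter (·.1 = q) with hTs
  have hlabel : ∀ S : List (ℕ × SA α k × List ℕ),
      (interList la k (Ts.map fun t => if t ∈ S then t.2.1 else compl t.2.1)).acc γ ↔
        ∀ t ∈ Ts, (t ∈ S ↔ t.2.1.acc γ) := by
    intro S
    simp only [acc_interList hla, List.forall_mem_map]
    refine forall₂_congr fun t _ => ?_
    split_ifs with h <;> simp [h, hcompl]
  have hTs_mem : ∀ {B L}, (q, B, L) ∈ A.1 → (q, B, L) ∈ Ts := fun h => by simp [hTs, h]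
  simp only [complTransSucc, ← hTs, List.mem_flatMap, List.mem_map, Prod.mk.injEq]
  constructor
  · rintro ⟨_, pick, ⟨S, -, pick, hpick, rfl, rfl⟩, hsat, hP⟩ B L hmem hB
    have hS : (q, B, L) ∈ S := ((hlabel S).1 hsat _ (hTs_mem hmem)).2 hB
    exact List.exists_mem_sections_forall_iff.1 ⟨pick, hpick, hP⟩ L (List.mem_map_of_mem hS)
  · intro h
    let S := Ts.filter fun t => t.2.1.acc γ
    have hpos : ∀ l ∈ S.map (·.2.2), ∃ y ∈ l, P y := by
      simp only [S, hTs, List.forall_mem_map, List.mem_filter, decide_eq_true_eq]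
      rintro ⟨q', B, L⟩ ⟨⟨hmem, rfl⟩, hB⟩
      exact h B L hmem hB
    obtain ⟨pick, hpick, hP⟩ := List.exists_mem_sections_forall_iff.2 hpos
    refine ⟨_, pick, ⟨S, List.mem_sublists.2 List.filter_sublist, pick, hpick, rfl, rfl⟩,
      (hlabel S).2 fun t ht => ?_, hP⟩
    simp [S, ht]

noncomputable def compl (la : List α) : (k : ℕ) → SA α k → SA α k
  | 0, A => (Aut.prune A).complWith (complTransZero la (Aut.prune A)) la
  | k + 1, A => Aut.complWith A (complTransSucc la (compl la k) A) [univ la k]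

def complInit : (k : ℕ) → SA α k → ℕ → ℕ
  | 0, A, q => (Aut.prune A).complInit q
  | _ + 1, A, q => Aut.complInit A q

theorem init_compl (la : List α) : ∀ (k : ℕ) (A : SA α k),
    init k (compl la k A) = complInit k A (init k A)
  | 0, A => (Aut.complInit_init (Aut.prune A)).symm
  | _ + 1, A => (Aut.complInit_init A).symm

theorem accFrom_compl {la : List α} (hla : ∀ a, a ∈ la) :
    ∀ (k : ℕ) (A : SA α k) (q : ℕ) (s : St α k),
      accFrom k (compl la k A) (complInit k A q) s ↔ ¬ accFrom k A q s
  | 0, A, q, w => by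
    rw [accFrom_zero_iff, accFrom_zero_iff]
    exact (Aut.accepts_complWith_complInit (dualTrans_complTransZero hla _)
      (fun a => ⟨a, hla a, rfl⟩) w q).trans (Aut.accepts_prune_iff w q).not
  | k + 1, A, q, s => by
    have hcompl : ∀ B s, (compl la k B).acc s ↔ ¬ B.acc s := fun B s => by
      rw [acc, init_compl]
      exact accFrom_compl hla k B _ s
    rw [accFrom_succ_iff, accFrom_succ_iff]
    exact Aut.accepts_complWith_complInit (dualTrans_complTransSucc hla hcompl A)
      (fun s => ⟨univ la k, List.mem_singleton_self _, acc_univ hla k s⟩) _ q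

end SA

noncomputable def MSA.compl {α P : Type} {k : ℕ} (la : List α) (M : MSA α P k) : MSA α P k where
  core := SA.compl la k M.core
  inits p := SA.complInit k M.core (M.inits p)
  nabla := M.nablaᶜ

theorem MSA.lang_compl {α P : Type} {k : ℕ} {la : List α} (hla : ∀ a, a ∈ la) (M : MSA α P k) :
    (M.compl la).Lang = M.Langᶜ := by
  ext ⟨p, _ | s⟩ <;> simp [MSA.Lang, MSA.compl, SA.accFrom_compl hla]

namespace Aut

variable {Lab Lab' : Type}

def size (cost : ℕ × Lab × List ℕ → ℕ) (A : Aut Lab) : ℕ := (A.1.map cost).sum + A.2.2.length + 1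

theorem size_inter_le {meet : Lab → Lab → Option Lab} {A B : Aut Lab}
    {cost : ℕ × Lab × List ℕ → ℕ} {D : ℕ} (hrelabel : ∀ f t, cost (relabel f t) = cost t)
    (hinit : ∀ s ∈ A.1, ∀ t ∈ B.1, ∀ c, meet s.2.1 t.2.1 = some c →
      cost (0, c, s.2.2.map leftState ++ t.2.2.map rightState) ≤ D * cost s * cost t) :
    size cost (A.inter meet B) ≤ (D + 2) * size cost A * size cost B := by
  have hnew : ((interInit meet A B).map cost).sum ≤
      D * (A.1.map cost).sum * (B.1.map cost).sum :=
    calc ((interInit meet A B).map cost).sum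
        ≤ (A.1.map fun s => (B.1.map fun t => D * cost s * cost t).sum).sum := by
          rw [interInit, List.sum_map_flatMap]
          refine List.sum_le_sum fun s hs => List.sum_map_filterMap_le fun t ht x hx => ?_
          split_ifs at hx
          obtain ⟨c, hc, rfl⟩ := Option.map_eq_some_iff.1 hx
          exact hinit s hs t ht c hc
      _ = D * (A.1.map cost).sum * (B.1.map cost).sum := by
          simp [List.sum_map_mul_left, List.sum_map_mul_right]
  have hren : ∀ (f : ℕ → ℕ) (δ : List (ℕ × Lab × List ℕ)),
      ((δ.map (relabel f)).map cost).sum = (δ.map cost).sum := by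
    intro f δ
    simp [Function.comp_def, hrelabel]
  have hfin : (A.inter meet B).2.2.length ≤ 1 + A.2.2.length + B.2.2.length := by
    simp only [inter, List.length_append, List.length_map]
    split_ifs <;> simp
  simp only [size, inter, List.map_append, List.sum_append, hren] at hfin ⊢
  generalize (A.1.map cost).sum = a, (B.1.map cost).sum = b, A.2.2.length = fa,
    B.2.2.length = fb at *
  nlinarith [Nat.mul_le_mul (Nat.mul_le_mul_left D (Nat.le_add_right a (fa + 1)))
    (Nat.le_add_right b (fb + 1))]

theorem length_states (A : Aut Lab) :
    A.states.length = 1 + (A.1.map fun t => t.2.2.length + 1).sum + A.2.2.length := by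
  simp [states, List.length_flatMap]
  omega

theorem size_complWith_le {A : Aut Lab} {trans : ℕ → List (Lab' × List ℕ)} {univ : List Lab'}
    {cost : ℕ × Lab' × List ℕ → ℕ} {T : ℕ}
    (htrans : ∀ q, ((trans q).map fun x => cost (q, x)).sum ≤ T) :
    size cost (A.complWith trans univ) ≤ A.states.length * T +
      (univ.map fun l => cost (A.fresh, l, [])).sum + A.states.length + 2 := by
  have hmain : ((A.states.flatMap fun q => (trans q).map fun x => (q, x)).map cost).sum ≤
      A.states.length * T := by
    rw [List.sum_map_flatMap, ← smul_eq_mul, ← List.length_map (f := fun q =>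
      (((trans q).map fun x => (q, x)).map cost).sum)]
    exact List.sum_le_card_nsmul _ _ (by simpa [Function.comp_def] using fun q _ => htrans q)
  have hfin := List.length_filter_le (fun q => decide (q ∉ A.2.2)) A.states
  simp only [size, complWith, List.map_append, List.sum_append, List.map_map, List.length_cons]
    at hmain ⊢
  simp only [Function.comp_def] at hmain ⊢
  omega

theorem length_prune_le (A : Aut Lab) : A.prune.1.length ≤ A.1.length :=
  List.length_filterMap_le _ _

theorem length_states_prune_le (A : Aut Lab) :
    A.prune.states.length ≤ (A.1.length + A.2.2.length + 1) ^ 2 := by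
  have htgt : (A.prune.1.map fun t => t.2.2.length + 1).sum ≤
      A.1.length * (A.1.length + A.2.2.length + 1) := by
    refine (List.sum_le_card_nsmul _ (A.live.length + 1) ?_).trans ?_
    · simp only [List.forall_mem_map]
      exact fun t ht => Nat.succ_le_succ (length_le_of_mem_prune ht)
    · rw [List.length_map, smul_eq_mul, live, List.length_append, List.length_map]
      exact Nat.mul_le_mul_right _ A.length_prune_le
  rw [length_states]
  simp only [prune] at htgt ⊢
  nlinarith

end Aut

namespace SA

variable {α : Type}

theorem size_zero_eq (A : SA α 0) : size 0 A = Aut.size (fun _ => 1) A := by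
  simp [size, Aut.size]

theorem size_succ_eq {k : ℕ} (A : SA α (k + 1)) :
    size (k + 1) A = Aut.size (fun t => size k t.2.1 + t.2.2.length + 1) A := rfl

theorem size_univ (la : List α) : ∀ k, size k (univ la k) = la.length + 3 * k + 2
  | 0 => by simp [size, univ]
  | k + 1 => by
    simp only [size, univ, size_univ la k, List.map_cons, List.map_nil, List.sum_cons,
      List.sum_nil, List.length_cons, List.length_nil]
    ring

theorem size_inter_le : ∀ (k : ℕ) (A B : SA α k),
    size k (inter k A B) ≤ (3 * k + 3) * size k A * size k B
  | 0, A, B => by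
    simp only [size_zero_eq]
    exact Aut.size_inter_le (D := 1) (fun _ _ => rfl) fun _ _ _ _ _ _ => by simp
  | k + 1, A, B => by
    simp only [size_succ_eq]
    refine Aut.size_inter_le (D := 3 * k + 4) (fun _ _ => by simp [Aut.relabel]) ?_
    rintro ⟨q₁, B₁, L₁⟩ - ⟨q₂, B₂, L₂⟩ - c hc
    cases hc
    have := size_inter_le k B₁ B₂
    simp only [List.length_append, List.length_map]
    nlinarith [Nat.mul_le_mul (Nat.le_add_right (size k B₁) (L₁.length + 1))
      (Nat.le_add_right (size k B₂) (L₂.length + 1))]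

theorem size_interList_le (la : List α) (k : ℕ) :
    ∀ Bs : List (SA α k), size k (interList la k Bs) ≤
      (la.length + 3 * k + 2) * (Bs.map fun B => (3 * k + 3) * size k B).prod
  | [] => by simp [interList, size_univ]
  | B :: Bs => by
    rw [show interList la k (B :: Bs) = inter k B (interList la k Bs) from rfl]
    calc size k (inter k B (interList la k Bs))
        ≤ (3 * k + 3) * size k B * size k (interList la k Bs) := size_inter_le k _ _
      _ ≤ (3 * k + 3) * size k B * ((la.length + 3 * k + 2) *
            (Bs.map fun B => (3 * k + 3) * size k B).prod) :=
          Nat.mul_le_mul_left _ (size_interList_le la k Bs)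
      _ = _ := by simp only [List.map_cons, List.prod_cons]; ring

theorem length_complTransZero_le {la : List α} {A : SA α 0} {N : ℕ} (hN : 2 ≤ N)
    (hA : size 0 A ≤ N) (hla : la.length ≤ N) (q : ℕ) :
    (complTransZero la (Aut.prune A) q).length ≤ 2 ^ N ^ 3 := by
  have hlive : (Aut.live A).length ≤ N := by
    simp only [size, Aut.live, List.length_append, List.length_map] at hA ⊢
    omega
  simp only [complTransZero, List.length_flatMap, List.length_map, List.length_sections]
  refine sum_le_two_pow_pow_succ hN ?_ ?_
  · simp only [List.length_map]
    exact le_two_pow_pow_of_le_pow (hla.trans (Nat.le_self_pow (by norm_num) N))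
  · simp only [List.forall_mem_map]
    intro a _
    refine prod_le_two_pow_pow_add (e := 1) (e' := 1) ?_ ?_
    · simp only [List.length_map, pow_one]
      refine (List.length_filter_le _ _).trans ((Aut.length_prune_le A).trans ?_)
      simp only [size] at hA
      omega
    · simp only [List.forall_mem_map, List.mem_filter, pow_one]
      exact fun t ht => (Aut.length_le_of_mem_prune ht.1).trans (hlive.trans
        Nat.lt_two_pow_self.le)

theorem size_compl_zero_le (la : List α) (A : SA α 0) :
    size 0 (compl la 0 A) ≤ 2 ^ (size 0 A + la.length + 2) ^ 5 := by
  set N := size 0 A + la.length + 2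
  have hN : 3 ≤ N := by simp only [N, size]; omega
  have hstates : (Aut.prune A).states.length ≤ N ^ 2 :=
    (Aut.length_states_prune_le A).trans (Nat.pow_le_pow_left (by simp only [N, size]; omega) 2)
  have hsize := Aut.size_complWith_le (A := Aut.prune A) (trans := complTransZero la (Aut.prune A))
    (univ := la) (cost := fun _ => 1) (T := 2 ^ N ^ 3) fun q => by
      simpa using length_complTransZero_le (la := la) (A := A) (by omega) (by omega) (by omega) q
  rw [size_zero_eq]
  refine hsize.trans ?_
  simp only [List.map_const', List.sum_replicate, smul_eq_mul, mul_one]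
  rw [show (Aut.prune A).states.length * 2 ^ N ^ 3 + la.length + (Aut.prune A).states.length + 2
    = (Aut.prune A).states.length * 2 ^ N ^ 3 + (la.length + (Aut.prune A).states.length + 2)
    by ring]
  refine add_le_two_pow_pow_succ (by omega) (mul_le_two_pow_pow_succ (by omega) ?_ le_rfl) ?_
  · exact le_two_pow_pow_of_le_pow (hstates.trans (Nat.pow_le_pow_right (by omega) (by norm_num)))
  · refine le_two_pow_pow_of_le_pow ?_
    have h2 : 9 ≤ N ^ 2 := by nlinarith
    have : N + N ^ 2 + 2 ≤ N ^ 4 := by nlinarith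
    have : la.length ≤ N := by omega
    omega

theorem size_interList_le_two_pow_pow {la : List α} {k N c : ℕ} {Bs : List (SA α k)} (hN : 2 ≤ N)
    (hla : la.length ≤ N) (hc : 3 * k + 3 ≤ c) (hlen : Bs.length ≤ N)
    (hBs : ∀ B ∈ Bs, size k B ≤ 2 ^ N ^ c) : size k (interList la k Bs) ≤ 2 ^ N ^ (c + 3) := by
  have hN1 : 1 ≤ N := by omega
  have hk : 3 * k + 3 ≤ 2 ^ N ^ c :=
    (le_two_pow_pow_self hN (3 * k + 3)).trans (two_pow_pow_mono hN1 hc)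
  have hNc : N ≤ 2 ^ N ^ c :=
    (le_two_pow_pow_of_le_pow (pow_one N).ge).trans (two_pow_pow_mono hN1 (by omega))
  refine (size_interList_le la k Bs).trans (mul_le_two_pow_pow_succ hN ?_ ?_)
  · exact (add_le_two_pow_pow_succ hN (hla.trans hNc) hk).trans' (by omega) |>.trans
      (two_pow_pow_mono hN1 (by omega))
  · refine prod_le_two_pow_pow_add (e' := 1) (by simpa using hlen) ?_
    simp only [List.forall_mem_map]
    exact fun B hB => mul_le_two_pow_pow_succ hN hk (hBs B hB)

theorem le_size_succ_of_mem {k : ℕ} {A : SA α (k + 1)} {t : ℕ × SA α k × List ℕ} (ht : t ∈ A.1) :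
    size k t.2.1 + t.2.2.length + 1 ≤ size (k + 1) A := by
  have := List.le_sum_of_mem
    (List.mem_map_of_mem (f := fun t => size k t.2.1 + t.2.2.length + 1) ht)
  simp only [size]
  omega

theorem length_le_size_succ {k : ℕ} (A : SA α (k + 1)) : A.1.length ≤ size (k + 1) A := by
  have := List.length_le_sum_of_one_le (A.1.map fun t => size k t.2.1 + t.2.2.length + 1)
    (by simp only [List.mem_map]; rintro _ ⟨t, -, rfl⟩; omega)
  simp only [size, List.length_map] at this ⊢
  omega

theorem length_states_le_size_succ {k : ℕ} (A : SA α (k + 1)) :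
    (Aut.states A).length ≤ size (k + 1) A := by
  have := List.sum_le_sum (l := A.1) (f := fun t => t.2.2.length + 1)
    (g := fun t => size k t.2.1 + t.2.2.length + 1) fun _ _ => by omega
  refine (Aut.length_states (Lab := SA α k) A).trans_le ?_
  simp only [size] at this ⊢
  omega

theorem sum_cost_sublists_sections_le {k N e : ℕ} {Ts : List (ℕ × SA α k × List ℕ)}
    {label : List (ℕ × SA α k × List ℕ) → SA α k} (hN : 2 ≤ N) (he : 2 ≤ e)
    (hlen : Ts.length ≤ N) (htgt : ∀ t ∈ Ts, t.2.2.length ≤ N)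
    (hlabel : ∀ S, size k (label S) ≤ 2 ^ N ^ e) :
    ((Ts.sublists.flatMap fun S => (S.map (·.2.2)).sections.map fun pick => (label S, pick)).map
      fun x => size k x.1 + x.2.length + 1).sum ≤ 2 ^ N ^ (e + 3) := by
  have hN1 : 1 ≤ N := by omega
  simp only [List.sum_map_flatMap, List.map_map, Function.comp_def]
  refine sum_le_two_pow_pow_succ hN ?_ ?_
  · rw [List.length_map, List.length_sublists]
    exact (Nat.pow_le_pow_right two_pos (hlen.trans (pow_one N).ge)).trans
      (two_pow_pow_mono hN1 (by omega))
  simp only [List.forall_mem_map, List.mem_sublists]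
  intro S hS
  refine sum_le_two_pow_pow_succ hN ?_ ?_
  · rw [List.length_map, List.length_sections]
    refine (prod_le_two_pow_pow_add (e := 1) (e' := 1) ?_ ?_).trans
      (two_pow_pow_mono hN1 (by omega))
    · simpa using hS.length_le.trans hlen
    · simp only [List.forall_mem_map, pow_one]
      exact fun t ht => (htgt t (hS.subset ht)).trans Nat.lt_two_pow_self.le
  simp only [List.forall_mem_map]
  intro pick hpick
  have hpick_len : pick.length ≤ N := by
    rw [List.mem_sections_length hpick, List.length_map]
    exact hS.length_le.trans hlen
  rw [add_assoc]
  refine add_le_two_pow_pow_succ hN (hlabel S) ?_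
  exact (le_two_pow_pow_of_le_pow (e := 2) (by nlinarith)).trans (two_pow_pow_mono hN1 he)

theorem sum_cost_complTransSucc_le {la : List α} {k N c : ℕ} {compl : SA α k → SA α k}
    {A : SA α (k + 1)} (hN : 2 ≤ N) (hA : size (k + 1) A + la.length + 2 ≤ N)
    (hc : 3 * k + 3 ≤ c) (hcompl : ∀ t ∈ A.1, size k (compl t.2.1) ≤ 2 ^ N ^ c) (q : ℕ) :
    ((complTransSucc la compl A q).map fun x => size k x.1 + x.2.length + 1).sum ≤
      2 ^ N ^ (c + 6) := by
  classical
  have hA_mem : ∀ t ∈ A.1.filter (·.1 = q), size k t.2.1 + t.2.2.length + 1 ≤ N :=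
    fun t ht => (le_size_succ_of_mem (List.mem_filter.1 ht).1).trans (by omega)
  have hlen : (A.1.filter (·.1 = q)).length ≤ N :=
    (List.length_filter_le _ _).trans ((length_le_size_succ A).trans (by omega))
  refine sum_cost_sublists_sections_le hN (by omega) hlen (fun t ht => by
    have := hA_mem t ht; omega) fun S => ?_
  refine size_interList_le_two_pow_pow hN (by omega) hc (by simpa using hlen) ?_
  simp only [List.forall_mem_map]
  intro t ht
  split_ifs
  · have := hA_mem t ht
    exact (le_two_pow_pow_of_le_pow (pow_one N).ge).trans' (by omega) |>.trans
      (two_pow_pow_mono (by omega) (by omega))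
  · exact hcompl t (List.mem_filter.1 ht).1

theorem size_compl_le (la : List α) : ∀ (k : ℕ) (A : SA α k),
    size k (compl la k A) ≤ 2 ^ (size k A + la.length + 2) ^ (8 * k + 5)
  | 0, A => size_compl_zero_le la A
  | k + 1, A => by
    set N := size (k + 1) A + la.length + 2
    have hN : 3 ≤ N := by simp only [N, size]; omega
    have hN1 : 1 ≤ N := by omega
    have hcompl : ∀ t ∈ A.1, size k (compl la k t.2.1) ≤ 2 ^ N ^ (8 * k + 5) := fun t ht =>
      (size_compl_le la k t.2.1).trans (Nat.pow_le_pow_right two_pos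
        (Nat.pow_le_pow_left (by have := le_size_succ_of_mem ht; omega) _))
    have hstates : (Aut.states A).length ≤ N := (length_states_le_size_succ A).trans (by omega)
    have hsize := Aut.size_complWith_le (A := A) (trans := complTransSucc la (compl la k) A)
      (univ := [univ la k]) (cost := fun t => size k t.2.1 + t.2.2.length + 1)
      (sum_cost_complTransSucc_le (by omega) le_rfl (by omega) hcompl)
    rw [size_succ_eq]
    refine hsize.trans ?_
    simp only [List.map_cons, List.map_nil, List.sum_cons, List.sum_nil, size_univ,
      List.length_nil]
    rw [show (Aut.states A).length * 2 ^ N ^ (8 * k + 5 + 6) + (la.length + 3 * k + 2 + 0 + 1 + 0)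
        + (Aut.states A).length + 2 = (Aut.states A).length * 2 ^ N ^ (8 * k + 5 + 6)
          + ((la.length + (Aut.states A).length + 2) + (3 * k + 3)) by ring]
    refine add_le_two_pow_pow_succ (by omega) (mul_le_two_pow_pow_succ (by omega) ?_ le_rfl) ?_
    · exact hstates.trans <|
        (le_two_pow_pow_of_le_pow (pow_one N).ge).trans (two_pow_pow_mono hN1 (by omega))
    · have hla : la.length + 2 ≤ N := by omega
      refine (add_le_two_pow_pow_succ (e := 8 * k + 5) (by omega) ?_ ?_).trans
        (two_pow_pow_mono hN1 (by omega))
      · refine (le_two_pow_pow_of_le_pow (e := 2) (by nlinarith)).trans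
          (two_pow_pow_mono hN1 (by omega))
      · exact (le_two_pow_pow_self (by omega) _).trans (two_pow_pow_mono hN1 (by omega))

end SA

theorem MSA.exists_lang_eq_compl {α P : Type} [Finite α] {k : ℕ} (M : MSA α P k) :
    ∃ Mbar : MSA α P k, Mbar.Lang = M.Langᶜ ∧
      Mbar.size ≤ 2 ^ (M.size + Nat.card α + 2) ^ (8 * k + 5) := by
  have := Fintype.ofFinite α
  let la := (Finset.univ : Finset α).toList
  refine ⟨M.compl la, MSA.lang_compl (fun a => by simp [la]) M, ?_⟩
  simpa [la, MSA.size, MSA.compl, Nat.card_eq_fintype_card] using SA.size_compl_le la k M.core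

/-- For every `n`-store multi-automaton `A` (here `n = k + 1`; `A` is
assumed total when `n = 1`), the complement automaton `Ā` obtained by the
inversion-of-target-sets construction satisfies `L(Ā^{q^j}) = complement of L(A^{q^j})`
for every control state `p^j` (including the treatment of the undefined store `∇`), and
the construction is at most exponential in the size of `A` — rendered as the existence of
such a complement multi-automaton of size at most `2^(poly(|A|))`.  In particular, regular
sets of configurations of order-`n` (A)PDSs are closed under complementation. -/
theorem complement_multi_automaton (k : ℕ) :
    (∃ c : ℕ,
      ∀ (α P : Type) [Finite α] [Finite P] (M : MSA α P k),
        SA.IsTotal k M.core →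
        ∃ Mbar : MSA α P k,
          Mbar.Lang = M.Langᶜ ∧
          Mbar.size ≤ 2 ^ ((M.size + Nat.card α + 2) ^ c)) ∧
    (∀ (α P : Type) [Finite α] [Finite P] (C : Set (AConf P α k)),
        Regular C → Regular Cᶜ) := by
  refine ⟨⟨8 * k + 5, fun α P _ _ M _ => M.exists_lang_eq_compl⟩, ?_⟩
  rintro α P _ _ C ⟨M, rfl⟩
  obtain ⟨Mbar, hMbar, -⟩ := M.exists_lang_eq_compl
  exact ⟨Mbar, hMbar⟩

end HOPDS
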